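/- arXiv:2205.07415 — 5 statements merged into one kernel-verified Lean document; each statement's English description precedes it below -/
import Mathlib

section
/- For any δ > 0, y > 0 and α ∈ (0,1), we have ∫₀^∞ [(y+z)^{-δ} - y^{-δ}] z^{-1-α} dz = -δ · α^{-1} B(α+δ, 1-α) · y^{-α-δ}, where B denotes the Beta function. -/
/-! Integrating by parts against `-z^(-α)/α` (the boundary terms vanish since
`(y + z)^(-δ) - y^(-δ)` is `O(z)` at `0` and bounded at `∞`) turns the integral into
`-(δ/α) ∫₀^∞ (y + z)^(-δ-1) z^(-α) dz`, and the substitution `t = y / (y + z)` turns that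
into `y^(-α-δ) B(α + δ, 1 - α)`. -/

open MeasureTheory

noncomputable def realBeta (p q : ℝ) : ℝ :=
  ∫ t in (0:ℝ)..1, t ^ (p - 1) * (1 - t) ^ (q - 1)

open Real Set Filter Topology

lemma integrableOn_Ioi_zero_of_norm_le_rpow {E : Type*} [NormedAddCommGroup E] {f : ℝ → E}
    {a b C D : ℝ} (ha : -1 < a) (hb : b < -1)
    (hf : AEStronglyMeasurable f (volume.restrict (Ioi 0)))
    (h_zero : ∀ z ∈ Ioc (0:ℝ) 1, ‖f z‖ ≤ C * z ^ a)
    (h_infty : ∀ z ∈ Ioi (1:ℝ), ‖f z‖ ≤ D * z ^ b) :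
    IntegrableOn f (Ioi 0) := by
  rw [← Ioc_union_Ioi_eq_Ioi zero_le_one]
  refine IntegrableOn.union ?_ ?_
  · refine Integrable.mono' ((intervalIntegral.intervalIntegrable_rpow' ha).1.const_mul C)
      (hf.mono_measure (Measure.restrict_mono Ioc_subset_Ioi_self le_rfl)) ?_
    filter_upwards [ae_restrict_mem measurableSet_Ioc] with z hz using h_zero z hz
  · refine Integrable.mono' ((integrableOn_Ioi_rpow_of_lt hb one_pos).const_mul D)
      (hf.mono_measure (Measure.restrict_mono (Ioi_subset_Ioi zero_le_one) le_rfl)) ?_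
    filter_upwards [ae_restrict_mem measurableSet_Ioi] with z hz using h_infty z hz

lemma integral_Ioi_add_rpow_mul_rpow_eq_realBeta (p q : ℝ) {y : ℝ} (hy : 0 < y) :
    ∫ z in Ioi (0:ℝ), (y + z) ^ (-(p + q)) * z ^ (p - 1) = y ^ (-q) * realBeta q p := by
  set φ : ℝ → ℝ := fun t => y / t - y
  have hφ_image : φ '' Ioo 0 1 = Ioi 0 := by
    ext z
    constructor
    · rintro ⟨t, ⟨ht0, ht1⟩, rfl⟩
      have : y < y / t := by rw [lt_div_iff₀ ht0]; nlinarith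
      simp only [mem_Ioi, φ]
      linarith
    · intro (hz : 0 < z)
      refine ⟨y / (y + z), ⟨by positivity, (div_lt_one (by positivity)).2 (by linarith)⟩, ?_⟩
      simp only [φ]
      field_simp
      ring
  have hφ_deriv : ∀ t ∈ Ioo (0:ℝ) 1, HasDerivWithinAt φ (-(y / t ^ 2)) (Ioo 0 1) t := by
    intro t ht
    have h := ((hasDerivAt_inv ht.1.ne').const_mul y).sub_const y
    simp only [← div_eq_mul_inv] at h
    exact (h.congr_deriv (by ring)).hasDerivWithinAt
  have hφ_inj : InjOn φ (Ioo 0 1) := by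
    intro a ha b hb hab
    have : y / a = y / b := by simpa [φ] using hab
    rw [div_eq_div_iff ha.1.ne' hb.1.ne'] at this
    exact (mul_left_cancel₀ hy.ne' this).symm
  have hjacobian : ∀ t ∈ Ioo (0:ℝ) 1,
      |-(y / t ^ 2)| • ((y + φ t) ^ (-(p + q)) * φ t ^ (p - 1))
        = y ^ (-q) * (t ^ (q - 1) * (1 - t) ^ (p - 1)) := by
    rintro t ⟨ht0, ht1⟩
    have h1t : 0 < 1 - t := by linarith
    have hyφ : y + φ t = y / t := by simp only [φ]; ring
    have hφt : φ t = y * (1 - t) / t := by simp only [φ]; field_simp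
    rw [hyφ, hφt, abs_neg, abs_of_pos (by positivity), smul_eq_mul, div_rpow hy.le ht0.le,
      div_rpow (by positivity) ht0.le, mul_rpow hy.le h1t.le]
    have hy_pow : y ^ (-q) = y * y ^ (-(p + q)) * y ^ (p - 1) := by
      rw [mul_comm y, ← rpow_add_one hy.ne', ← rpow_add hy]; ring_nf
    have ht_pow : t ^ (q - 1) * t ^ (-(p + q)) * t ^ (p - 1) * t ^ 2 = 1 := by
      rw [← rpow_natCast, ← rpow_add ht0, ← rpow_add ht0, ← rpow_add ht0]
      ring_nf
      exact rpow_zero t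
    rw [hy_pow]
    field_simp
    linear_combination -ht_pow
  rw [← hφ_image, integral_image_eq_integral_abs_deriv_smul measurableSet_Ioo hφ_deriv hφ_inj,
    setIntegral_congr_fun measurableSet_Ioo hjacobian, integral_const_mul, realBeta,
    intervalIntegral.integral_of_le zero_le_one, integral_Ioc_eq_integral_Ioo]

section

variable {y : ℝ}

lemma hasDerivAt_const_add_rpow (p : ℝ) {z : ℝ} (h : 0 < y + z) :
    HasDerivAt (fun x => (y + x) ^ p) (p * (y + z) ^ (p - 1)) z := by
  simpa using ((hasDerivAt_id' z).const_add y).rpow_const (p := p) (Or.inl h.ne')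

lemma integrableOn_const_add_rpow_mul_rpow (hy : 0 < y) {p r : ℝ} (hr : -1 < r)
    (hpr : p + r < -1) :
    IntegrableOn (fun z => (y + z) ^ p * z ^ r) (Ioi 0) := by
  refine integrableOn_Ioi_zero_of_norm_le_rpow (C := y ^ p) (D := 1) hr hpr
    ((((measurable_const.add measurable_id).pow_const p).mul
      (measurable_id.pow_const r)).aestronglyMeasurable) ?_ ?_
  · rintro z ⟨hz, -⟩
    rw [norm_of_nonneg (by positivity)]
    exact mul_le_mul_of_nonneg_right
      (rpow_le_rpow_of_nonpos hy (le_add_of_nonneg_right hz.le) (by linarith)) (by positivity)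
  · intro z (hz : 1 < z)
    rw [norm_of_nonneg (by positivity), one_mul, rpow_add (by linarith)]
    exact mul_le_mul_of_nonneg_right
      (rpow_le_rpow_of_nonpos (by linarith) (le_add_of_nonneg_left hy.le) (by linarith))
      (by positivity)

variable {δ : ℝ}

lemma abs_const_add_rpow_neg_sub_rpow_neg_le (hy : 0 < y) (hδ : 0 ≤ δ) {z : ℝ} (hz : 0 ≤ z) :
    |(y + z) ^ (-δ) - y ^ (-δ)| ≤ min (δ * y ^ (-δ - 1) * z) (y ^ (-δ)) := by
  have hmvt := (convex_Ici (0:ℝ)).norm_image_sub_le_of_norm_hasDerivWithin_le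
    (f := fun x => (y + x) ^ (-δ)) (C := δ * y ^ (-δ - 1))
    (fun x (hx : 0 ≤ x) => (hasDerivAt_const_add_rpow (-δ) (by linarith)).hasDerivWithinAt)
    (fun x (hx : 0 ≤ x) => ?_) self_mem_Ici hz
  · have hle : (y + z) ^ (-δ) ≤ y ^ (-δ) :=
      rpow_le_rpow_of_nonpos hy (le_add_of_nonneg_right hz) (by linarith)
    simp only [add_zero, sub_zero, norm_of_nonneg hz, Real.norm_eq_abs] at hmvt
    refine le_min hmvt ?_
    rw [abs_sub_comm, abs_of_nonneg (by linarith)]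
    exact sub_le_self _ (by positivity)
  · rw [norm_mul, norm_neg, norm_of_nonneg hδ, norm_of_nonneg (by positivity)]
    exact mul_le_mul_of_nonneg_left
      (rpow_le_rpow_of_nonpos hy (le_add_of_nonneg_right hx) (by linarith)) hδ

lemma integrableOn_const_add_rpow_neg_sub_mul_rpow (hy : 0 < y) (hδ : 0 ≤ δ) {α : ℝ}
    (hα : α ∈ Ioo (0:ℝ) 1) :
    IntegrableOn (fun z => ((y + z) ^ (-δ) - y ^ (-δ)) * z ^ (-1 - α)) (Ioi 0) := by
  obtain ⟨hα0, hα1⟩ := hα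
  refine integrableOn_Ioi_zero_of_norm_le_rpow (a := -α) (b := -1 - α)
    (C := δ * y ^ (-δ - 1)) (D := y ^ (-δ)) (by linarith) (by linarith)
    (((((measurable_const.add measurable_id).pow_const _).sub measurable_const).mul
      (measurable_id.pow_const _)).aestronglyMeasurable) ?_ ?_
  · rintro z ⟨hz, -⟩
    rw [norm_mul, norm_of_nonneg (by positivity : 0 ≤ z ^ (-1 - α)), Real.norm_eq_abs]
    calc |(y + z) ^ (-δ) - y ^ (-δ)| * z ^ (-1 - α)
        ≤ δ * y ^ (-δ - 1) * z * z ^ (-1 - α) := by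
          gcongr
          exact (abs_const_add_rpow_neg_sub_rpow_neg_le hy hδ hz.le).trans (min_le_left _ _)
      _ = δ * y ^ (-δ - 1) * z ^ (-α) := by
          rw [mul_assoc, mul_comm z, ← rpow_add_one hz.ne']; ring_nf
  · intro z (hz : 1 < z)
    rw [norm_mul, norm_of_nonneg (by positivity : 0 ≤ z ^ (-1 - α)), Real.norm_eq_abs]
    gcongr
    exact (abs_const_add_rpow_neg_sub_rpow_neg_le hy hδ (by linarith)).trans (min_le_right _ _)

lemma tendsto_const_add_rpow_neg_sub_mul_rpow_nhdsGT_zero (hy : 0 < y) (hδ : 0 ≤ δ) {α : ℝ}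
    (hα : α < 1) :
    Tendsto (fun z => ((y + z) ^ (-δ) - y ^ (-δ)) * z ^ (-α)) (𝓝[>] 0) (𝓝 0) := by
  have hpow : Tendsto (fun z : ℝ => δ * y ^ (-δ - 1) * z ^ (1 - α)) (𝓝[>] 0) (𝓝 0) := by
    simpa [zero_rpow (by linarith : 1 - α ≠ 0)] using
      ((continuousAt_rpow_const 0 (1 - α) (Or.inr (by linarith))).tendsto.mono_left
        nhdsWithin_le_nhds).const_mul (δ * y ^ (-δ - 1))
  refine squeeze_zero_norm' ?_ hpow
  filter_upwards [self_mem_nhdsWithin] with z (hz : 0 < z)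
  rw [norm_mul, norm_of_nonneg (by positivity : 0 ≤ z ^ (-α)), Real.norm_eq_abs]
  calc |(y + z) ^ (-δ) - y ^ (-δ)| * z ^ (-α)
      ≤ δ * y ^ (-δ - 1) * z * z ^ (-α) := by
        gcongr
        exact (abs_const_add_rpow_neg_sub_rpow_neg_le hy hδ hz.le).trans (min_le_left _ _)
    _ = δ * y ^ (-δ - 1) * z ^ (1 - α) := by
        rw [mul_assoc, mul_comm z, ← rpow_add_one hz.ne']; ring_nf

lemma tendsto_const_add_rpow_neg_sub_mul_rpow_atTop (hδ : 0 < δ) {α : ℝ} (hα : 0 < α) :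
    Tendsto (fun z => ((y + z) ^ (-δ) - y ^ (-δ)) * z ^ (-α)) atTop (𝓝 0) := by
  have hshift := (tendsto_rpow_neg_atTop hδ).comp (tendsto_atTop_add_const_left _ y tendsto_id)
  simpa using (hshift.sub_const (y ^ (-δ))).mul (tendsto_rpow_neg_atTop hα)

lemma integral_const_add_rpow_neg_sub_mul_rpow (hy : 0 < y) (hδ : 0 < δ) {α : ℝ}
    (hα : α ∈ Ioo (0:ℝ) 1) :
    ∫ z in Ioi 0, ((y + z) ^ (-δ) - y ^ (-δ)) * z ^ (-1 - α)
      = -(δ / α) * ∫ z in Ioi 0, (y + z) ^ (-δ - 1) * z ^ (-α) := by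
  obtain ⟨hα0, hα1⟩ := hα
  have hu : ∀ z ∈ Ioi (0:ℝ), HasDerivAt (fun x => (y + x) ^ (-δ) - y ^ (-δ))
      (-δ * (y + z) ^ (-δ - 1)) z := fun z (hz : 0 < z) =>
    (hasDerivAt_const_add_rpow (-δ) (by linarith)).sub_const _
  have hv : ∀ z ∈ Ioi (0:ℝ), HasDerivAt (fun x => -α⁻¹ * x ^ (-α)) (z ^ (-1 - α)) z := by
    intro z (hz : 0 < z)
    refine ((hasDerivAt_rpow_const (p := -α) (Or.inl hz.ne')).const_mul (-α⁻¹)).congr_deriv ?_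
    field_simp
    ring_nf
  have hu'v : IntegrableOn (fun z => -δ * (y + z) ^ (-δ - 1) * (-α⁻¹ * z ^ (-α))) (Ioi 0) :=
    IntegrableOn.congr_fun ((integrableOn_const_add_rpow_mul_rpow (p := -δ - 1) (r := -α) hy
      (by linarith) (by linarith)).const_mul (δ * α⁻¹)) (fun z _ => by ring) measurableSet_Ioi
  have h_zero := (tendsto_const_add_rpow_neg_sub_mul_rpow_nhdsGT_zero hy hδ.le hα1).const_mul
    (-α⁻¹)
  have h_infty := (tendsto_const_add_rpow_neg_sub_mul_rpow_atTop (y := y) hδ hα0).const_mul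
    (-α⁻¹)
  rw [mul_zero] at h_zero h_infty
  rw [integral_Ioi_mul_deriv_eq_deriv_mul hu hv
    (integrableOn_const_add_rpow_neg_sub_mul_rpow hy hδ.le ⟨hα0, hα1⟩) hu'v
    (h_zero.congr fun z => by simp only [Pi.mul_apply]; ring)
    (h_infty.congr fun z => by simp only [Pi.mul_apply]; ring),
    sub_self, zero_sub, ← integral_const_mul, ← integral_neg]
  congr 1 with z
  field_simp

end

theorem stmt0 (δ y α : ℝ) (hδ : 0 < δ) (hy : 0 < y) (hα : α ∈ Set.Ioo (0:ℝ) 1) :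
    ∫ z in Set.Ioi (0:ℝ), ((y + z) ^ (-δ) - y ^ (-δ)) * z ^ (-1 - α)
      = -δ * (α⁻¹ * realBeta (α + δ) (1 - α)) * y ^ (-α - δ) := by
  have hbeta := integral_Ioi_add_rpow_mul_rpow_eq_realBeta (1 - α) (α + δ) hy
  rw [show -(1 - α + (α + δ)) = -δ - 1 by ring, show 1 - α - 1 = -α by ring,
    show -(α + δ) = -α - δ by ring] at hbeta
  rw [integral_const_add_rpow_neg_sub_mul_rpow hy hδ hα, hbeta]
  ring
end

section
/- Let δ > 0 and g(y) = exp(-y^{-δ}). For any constants ā > 0, α ∈ (0,1) and A > 0, and all y > 0: ∫_A^∞ [g(y+z) - g(y)] ā z^{-1-α} dz ≥ g(y) δ ā c_{α,δ} y^{-α-δ} - g(y) δ ā (1-α)^{-1} A^{1-α} y^{-1-δ}, where c_{α,δ} = α^{-1} B(α+δ, 1-α). -/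
open MeasureTheory

open Set Real Filter Topology

/-!
Since `e^x - 1 ≥ x`, the integrand is at least `g(y) a (y^{-δ} - (y+z)^{-δ}) z^{-1-α}`.
Integrating by parts and substituting `u = y(1-t)/t` gives
`∫₀^∞ (y^{-δ} - (y+z)^{-δ}) z^{-1-α} dz = δ c_{α,δ} y^{-α-δ}`, while by the mean value theorem
`y^{-δ} - (y+z)^{-δ} ≤ δ y^{-1-δ} z`, so the part of this integral over `(0, A)` is at most
`δ y^{-1-δ} A^{1-α} / (1-α)`.
-/

theorem exp_neg_mul_sub_le_exp_neg_sub_exp_neg (s t : ℝ) :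
    exp (-s) * (s - t) ≤ exp (-t) - exp (-s) := by
  have h : exp (-t) = exp (-s) * exp (s - t) := by rw [← exp_add]; ring_nf
  nlinarith [add_one_le_exp (s - t), exp_pos (-s)]

theorem integrableOn_Ioi_zero_of_le_rpow {f : ℝ → ℝ} {p q C₀ C₁ : ℝ} (hp : -1 < p)
    (hq : q < -1) (hf : AEStronglyMeasurable f (volume.restrict (Ioi 0)))
    (h₀ : ∀ z ∈ Ioc (0 : ℝ) 1, ‖f z‖ ≤ C₀ * z ^ p)
    (h₁ : ∀ z ∈ Ioi (1 : ℝ), ‖f z‖ ≤ C₁ * z ^ q) :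
    IntegrableOn f (Ioi 0) := by
  rw [← Ioc_union_Ioi_eq_Ioi zero_le_one]
  refine IntegrableOn.union ?_ ?_
  · refine Integrable.mono' ?_ (hf.mono_set Ioc_subset_Ioi_self)
      ((ae_restrict_iff' measurableSet_Ioc).2 (.of_forall h₀))
    exact ((intervalIntegrable_iff_integrableOn_Ioc_of_le zero_le_one).1
      (intervalIntegral.intervalIntegrable_rpow' hp)).const_mul C₀
  · refine Integrable.mono' ?_ (hf.mono_set (Ioi_subset_Ioi zero_le_one))
      ((ae_restrict_iff' measurableSet_Ioi).2 (.of_forall h₁))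
    exact (integrableOn_Ioi_rpow_of_lt hq zero_lt_one).const_mul C₁

theorem integral_rpow_mul_add_rpow_eq_realBeta {y : ℝ} (hy : 0 < y) (a b : ℝ) :
    ∫ u in Ioi 0, u ^ (a - 1) * (y + u) ^ (-(a + b)) = y ^ (-b) * realBeta b a := by
  set f : ℝ → ℝ := fun t => y / t - y
  have himage : f '' Ioo 0 1 = Ioi 0 := by
    ext u
    simp only [f, mem_image, mem_Ioo, mem_Ioi]
    constructor
    · rintro ⟨t, ⟨ht₀, ht₁⟩, rfl⟩
      rw [sub_pos, lt_div_iff₀ ht₀]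
      nlinarith
    · intro hu
      refine ⟨y / (y + u), ⟨by positivity, (div_lt_one (by positivity)).2 (by linarith)⟩, ?_⟩
      field_simp
      ring
  have hderiv : ∀ t ∈ Ioo (0 : ℝ) 1, HasDerivWithinAt f (-y / t ^ 2) (Ioo 0 1) t := by
    intro t ht
    refine (((hasDerivAt_inv (ne_of_gt ht.1)).const_mul y).sub_const y).hasDerivWithinAt
      |>.congr_deriv ?_
    ring
  have hinj : InjOn f (Ioo 0 1) := by
    intro s hs t ht hst
    simpa [f, div_eq_mul_inv, hy.ne'] using hst
  have hsubst : ∀ t ∈ Ioo (0 : ℝ) 1,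
      |-y / t ^ 2| • (f t ^ (a - 1) * (y + f t) ^ (-(a + b)))
        = y ^ (-b) * (t ^ (b - 1) * (1 - t) ^ (a - 1)) := by
    rintro t ⟨ht₀, ht₁⟩
    have h₁ : 0 < 1 - t := by linarith
    rw [show f t = y * (1 - t) / t by simp only [f]; field_simp,
      show y + y * (1 - t) / t = y / t by field_simp; ring, smul_eq_mul,
      abs_of_neg (by simp only [neg_div, neg_lt_zero]; positivity), neg_div, neg_neg,
      div_rpow (by positivity) ht₀.le, mul_rpow hy.le h₁.le, div_rpow hy.le ht₀.le,
      ← rpow_natCast t 2]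
    simp only [rpow_def_of_pos hy, rpow_def_of_pos ht₀, rpow_def_of_pos h₁, div_eq_mul_inv,
      ← exp_neg, ← exp_add]
    nth_rewrite 1 [← exp_log hy]
    rw [← exp_add, ← exp_add]
    congr 1
    push_cast
    ring
  rw [← himage, integral_image_eq_integral_abs_deriv_smul measurableSet_Ioo hderiv hinj,
    setIntegral_congr_fun measurableSet_Ioo hsubst, integral_const_mul, realBeta,
    intervalIntegral.integral_of_le zero_le_one, integral_Ioc_eq_integral_Ioo]

section

variable {y δ α A : ℝ}

theorem rpow_neg_sub_rpow_neg_nonneg (hy : 0 < y) (hδ : 0 ≤ δ) {z : ℝ} (hz : 0 ≤ z) :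
    0 ≤ y ^ (-δ) - (y + z) ^ (-δ) :=
  sub_nonneg.2 (rpow_le_rpow_of_nonpos hy (by linarith) (by linarith))

theorem rpow_neg_sub_rpow_neg_le (hy : 0 < y) (hδ : 0 ≤ δ) {z : ℝ} (hz : 0 ≤ z) :
    y ^ (-δ) - (y + z) ^ (-δ) ≤ δ * y ^ (-δ - 1) * z := by
  have hderiv : ∀ x ∈ Ioi (0 : ℝ), HasDerivAt (fun x => -x ^ (-δ)) (δ * x ^ (-δ - 1)) x :=
    fun x hx => by simpa using (hasDerivAt_rpow_const (p := -δ) (Or.inl hx.ne')).fun_neg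
  have hmvt := (convex_Ici y).image_sub_le_mul_sub_of_deriv_le (f := fun x => -x ^ (-δ))
    (fun x hx => (hderiv x (hy.trans_le hx)).continuousAt.continuousWithinAt)
    (fun x hx =>
      (hderiv x (hy.trans (interior_Ici.subset hx))).differentiableAt.differentiableWithinAt)
    (C := δ * y ^ (-δ - 1)) (fun x hx => by
      rw [interior_Ici] at hx
      rw [(hderiv x (hy.trans hx)).deriv]
      exact mul_le_mul_of_nonneg_left (rpow_le_rpow_of_nonpos hy hx.le (by linarith)) hδ)
    y self_mem_Ici (y + z) (by simpa using hz) (by linarith)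
  simp only [add_sub_cancel_left] at hmvt
  linarith

theorem rpow_neg_sub_rpow_neg_mul_rpow_le (hy : 0 < y) (hδ : 0 ≤ δ) {z : ℝ} (hz : 0 < z) :
    (y ^ (-δ) - (y + z) ^ (-δ)) * z ^ (-1 - α) ≤ δ * y ^ (-δ - 1) * z ^ (-α) := by
  rw [show -α = 1 + (-1 - α) by ring, rpow_add hz, rpow_one, ← mul_assoc]
  exact mul_le_mul_of_nonneg_right (rpow_neg_sub_rpow_neg_le hy hδ hz.le) (by positivity)

theorem integrableOn_rpow_neg_sub_rpow_neg_mul_rpow (hy : 0 < y) (hδ : 0 ≤ δ) (hα₀ : 0 < α)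
    (hα₁ : α < 1) :
    IntegrableOn (fun z => (y ^ (-δ) - (y + z) ^ (-δ)) * z ^ (-1 - α)) (Ioi 0) := by
  refine integrableOn_Ioi_zero_of_le_rpow (p := -α) (q := -1 - α) (C₀ := δ * y ^ (-δ - 1))
    (C₁ := y ^ (-δ)) (by linarith) (by linarith) (by fun_prop) (fun z hz => ?_) (fun z hz => ?_)
  · have hz₀ : 0 < z := hz.1
    rw [norm_of_nonneg (mul_nonneg (rpow_neg_sub_rpow_neg_nonneg hy hδ hz₀.le) (by positivity))]
    exact rpow_neg_sub_rpow_neg_mul_rpow_le hy hδ hz₀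
  · have hz₀ : (0 : ℝ) < z := zero_lt_one.trans hz
    rw [norm_of_nonneg (mul_nonneg (rpow_neg_sub_rpow_neg_nonneg hy hδ hz₀.le) (by positivity))]
    exact mul_le_mul_of_nonneg_right (sub_le_self _ (by positivity)) (by positivity)

theorem integrableOn_rpow_mul_add_rpow (hy : 0 < y) (hδ : 0 ≤ δ) (hα₀ : 0 < α) (hα₁ : α < 1) :
    IntegrableOn (fun z => z ^ (-α) * (y + z) ^ (-δ - 1)) (Ioi 0) := by
  refine integrableOn_Ioi_zero_of_le_rpow (p := -α) (q := -α - δ - 1) (C₀ := y ^ (-δ - 1))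
    (C₁ := 1) (by linarith) (by linarith) (by fun_prop) (fun z hz => ?_) (fun z hz => ?_)
  · have hz₀ : 0 < z := hz.1
    rw [norm_of_nonneg (by positivity), mul_comm]
    exact mul_le_mul_of_nonneg_right
      (rpow_le_rpow_of_nonpos hy (le_add_of_nonneg_right hz₀.le) (by linarith)) (by positivity)
  · have hz₀ : (0 : ℝ) < z := zero_lt_one.trans hz
    rw [norm_of_nonneg (by positivity), one_mul, sub_sub, rpow_sub hz₀, div_eq_mul_inv,
      ← rpow_neg hz₀.le, neg_add]
    exact mul_le_mul_of_nonneg_left (rpow_le_rpow_of_nonpos hz₀ (by linarith) (by linarith))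
      (by positivity)

theorem integral_rpow_neg_sub_rpow_neg_mul_rpow (hy : 0 < y) (hδ : 0 < δ) (hα₀ : 0 < α)
    (hα₁ : α < 1) :
    ∫ z in Ioi 0, (y ^ (-δ) - (y + z) ^ (-δ)) * z ^ (-1 - α)
      = δ / α * ∫ z in Ioi 0, z ^ (-α) * (y + z) ^ (-δ - 1) := by
  set Φ : ℝ → ℝ := fun z => (y ^ (-δ) - (y + z) ^ (-δ)) * z ^ (-α)
  have hderiv : ∀ z ∈ Ioi (0 : ℝ), HasDerivAt Φ
      (δ * (z ^ (-α) * (y + z) ^ (-δ - 1))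
        - α * ((y ^ (-δ) - (y + z) ^ (-δ)) * z ^ (-1 - α))) z := by
    intro z hz
    have hyz : y + z ≠ 0 := by linarith [hz.out]
    have h₁ : HasDerivAt (fun z => (y + z) ^ (-δ)) (-δ * (y + z) ^ (-δ - 1)) z := by
      simpa using ((hasDerivAt_id z).const_add y).rpow_const (p := -δ) (Or.inl hyz)
    have h₂ : HasDerivAt (fun z => z ^ (-α)) (-α * z ^ (-α - 1)) z :=
      hasDerivAt_rpow_const (Or.inl (ne_of_gt hz))
    refine ((h₁.const_sub (y ^ (-δ))).mul h₂).congr_deriv ?_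
    rw [show -α - 1 = -1 - α by ring]
    ring
  have hcont : ContinuousWithinAt Φ (Ici 0) 0 := by
    have hΦ₀ : Φ 0 = 0 := by simp [Φ]
    rw [ContinuousWithinAt, hΦ₀]
    refine squeeze_zero' (g := fun z => δ * y ^ (-δ - 1) * z ^ (1 - α)) ?_ ?_ ?_
    · filter_upwards [self_mem_nhdsWithin] with z hz
      exact mul_nonneg (rpow_neg_sub_rpow_neg_nonneg hy hδ.le hz) (rpow_nonneg hz _)
    · filter_upwards [self_mem_nhdsWithin] with z hz
      rw [show 1 - α = 1 + -α by ring, rpow_add' hz (by linarith), rpow_one, ← mul_assoc]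
      exact mul_le_mul_of_nonneg_right (rpow_neg_sub_rpow_neg_le hy hδ.le hz) (rpow_nonneg hz _)
    · refine ((continuous_const.mul (continuous_rpow_const (by linarith))).tendsto' 0 0 ?_)
        |>.mono_left nhdsWithin_le_nhds
      simp [zero_rpow (by linarith : 1 - α ≠ 0)]
  have hlim : Tendsto Φ atTop (𝓝 0) := by
    have := ((tendsto_const_nhds (x := y ^ (-δ))).sub
      ((tendsto_rpow_neg_atTop hδ).comp (tendsto_atTop_add_const_left _ y tendsto_id))).mul
      (tendsto_rpow_neg_atTop hα₀)
    simpa using this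
  have hG := (integrableOn_rpow_mul_add_rpow hy hδ.le hα₀ hα₁).const_mul δ
  have hH := (integrableOn_rpow_neg_sub_rpow_neg_mul_rpow hy hδ.le hα₀ hα₁).const_mul α
  have := integral_Ioi_of_hasDerivAt_of_tendsto hcont hderiv (hG.sub hH) hlim
  rw [integral_sub hG hH, integral_const_mul, integral_const_mul] at this
  simp only [Φ, add_zero, sub_self, zero_mul] at this
  rw [div_mul_eq_mul_div, eq_div_iff hα₀.ne']
  linarith

theorem setIntegral_Ioc_rpow_neg_sub_rpow_neg_mul_rpow_le (hy : 0 < y) (hδ : 0 ≤ δ) (hα₀ : 0 < α)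
    (hα₁ : α < 1) (hA : 0 ≤ A) :
    ∫ z in Ioc 0 A, (y ^ (-δ) - (y + z) ^ (-δ)) * z ^ (-1 - α)
      ≤ δ * y ^ (-δ - 1) * (A ^ (1 - α) / (1 - α)) := by
  have hpow : IntegrableOn (fun z : ℝ => z ^ (-α)) (Ioc 0 A) :=
    (intervalIntegrable_iff_integrableOn_Ioc_of_le hA).1
      (intervalIntegral.intervalIntegrable_rpow' (by linarith))
  calc ∫ z in Ioc 0 A, (y ^ (-δ) - (y + z) ^ (-δ)) * z ^ (-1 - α)
      ≤ ∫ z in Ioc 0 A, δ * y ^ (-δ - 1) * z ^ (-α) :=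
        setIntegral_mono_on ((integrableOn_rpow_neg_sub_rpow_neg_mul_rpow hy hδ hα₀ hα₁).mono_set
          Ioc_subset_Ioi_self) (hpow.const_mul _) measurableSet_Ioc
          fun z hz => rpow_neg_sub_rpow_neg_mul_rpow_le hy hδ hz.1
    _ = δ * y ^ (-δ - 1) * (A ^ (1 - α) / (1 - α)) := by
        rw [integral_const_mul, ← intervalIntegral.integral_of_le hA,
          integral_rpow (Or.inl (by linarith)), zero_rpow (by linarith),
          show -α + 1 = 1 - α by ring, sub_zero]

theorem le_setIntegral_Ioi_rpow_neg_sub_rpow_neg_mul_rpow (hy : 0 < y) (hδ : 0 < δ)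
    (hα₀ : 0 < α) (hα₁ : α < 1) (hA : 0 ≤ A) :
    δ / α * (y ^ (-α - δ) * realBeta (α + δ) (1 - α))
        - δ * y ^ (-δ - 1) * (A ^ (1 - α) / (1 - α))
      ≤ ∫ z in Ioi A, (y ^ (-δ) - (y + z) ^ (-δ)) * z ^ (-1 - α) := by
  have hint := integrableOn_rpow_neg_sub_rpow_neg_mul_rpow hy hδ.le hα₀ hα₁
  have hsplit := setIntegral_union (Ioc_disjoint_Ioi le_rfl) measurableSet_Ioi
    (hint.mono_set Ioc_subset_Ioi_self) (hint.mono_set (Ioi_subset_Ioi hA))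
  have hbeta := integral_rpow_mul_add_rpow_eq_realBeta hy (1 - α) (α + δ)
  rw [show 1 - α - 1 = -α by ring, show -(1 - α + (α + δ)) = -δ - 1 by ring,
    show -(α + δ) = -α - δ by ring] at hbeta
  rw [Ioc_union_Ioi_eq_Ioi hA, integral_rpow_neg_sub_rpow_neg_mul_rpow hy hδ hα₀ hα₁,
    hbeta] at hsplit
  linarith [setIntegral_Ioc_rpow_neg_sub_rpow_neg_mul_rpow_le hy hδ.le hα₀ hα₁ hA]

theorem integrableOn_exp_neg_rpow_sub_mul_rpow (hy : 0 ≤ y) (hα₀ : 0 < α) (hA : 0 < A)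
    (a : ℝ) :
    IntegrableOn
      (fun z => (exp (-((y + z) ^ (-δ))) - exp (-(y ^ (-δ)))) * (a * z ^ (-1 - α))) (Ioi A) := by
  refine Integrable.mono'
    ((integrableOn_Ioi_rpow_of_lt (a := -1 - α) (by linarith) hA).const_mul a).norm
    (by fun_prop) ((ae_restrict_iff' measurableSet_Ioi).2 (.of_forall fun z hz => ?_))
  have h₁ : exp (-((y + z) ^ (-δ))) ≤ 1 :=
    exp_le_one_iff.2 (neg_nonpos.2 (rpow_nonneg (by linarith [hA.trans hz.out]) _))
  have h₂ : exp (-(y ^ (-δ))) ≤ 1 := exp_le_one_iff.2 (neg_nonpos.2 (rpow_nonneg hy _))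
  rw [norm_mul]
  refine mul_le_of_le_one_left (norm_nonneg _) (abs_sub_le_iff.2 ⟨?_, ?_⟩) <;>
    linarith [exp_pos (-((y + z) ^ (-δ))), exp_pos (-(y ^ (-δ)))]

end

theorem stmt4 (δ a A α : ℝ) (hδ : 0 < δ) (ha : 0 < a) (hA : 0 < A)
    (hα : α ∈ Set.Ioo (0:ℝ) 1) (y : ℝ) (hy : 0 < y) :
    (Real.exp (-(y ^ (-δ))) * δ * a * (α⁻¹ * realBeta (α + δ) (1 - α)) * y ^ (-α - δ)
        - Real.exp (-(y ^ (-δ))) * δ * a * (1 - α)⁻¹ * A ^ (1 - α) * y ^ (-1 - δ))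
      ≤ ∫ z in Set.Ioi A,
          (Real.exp (-((y + z) ^ (-δ))) - Real.exp (-(y ^ (-δ)))) * (a * z ^ (-1 - α)) := by
  obtain ⟨hα₀, hα₁⟩ := hα
  have hint : IntegrableOn (fun z => (y ^ (-δ) - (y + z) ^ (-δ)) * z ^ (-1 - α)) (Ioi A) :=
    (integrableOn_rpow_neg_sub_rpow_neg_mul_rpow hy hδ.le hα₀ hα₁).mono_set (Ioi_subset_Ioi hA.le)
  calc _ = exp (-(y ^ (-δ))) * a * (δ / α * (y ^ (-α - δ) * realBeta (α + δ) (1 - α))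
          - δ * y ^ (-δ - 1) * (A ^ (1 - α) / (1 - α))) := by
        rw [show -1 - δ = -δ - 1 by ring]
        ring
    _ ≤ exp (-(y ^ (-δ))) * a * ∫ z in Ioi A, (y ^ (-δ) - (y + z) ^ (-δ)) * z ^ (-1 - α) := by
        gcongr
        exact le_setIntegral_Ioi_rpow_neg_sub_rpow_neg_mul_rpow hy hδ hα₀ hα₁ hA.le
    _ = ∫ z in Ioi A, exp (-(y ^ (-δ))) * a * ((y ^ (-δ) - (y + z) ^ (-δ)) * z ^ (-1 - α)) :=
        (integral_const_mul _ _).symm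
    _ ≤ _ := by
        refine setIntegral_mono_on (hint.const_mul _)
          (integrableOn_exp_neg_rpow_sub_mul_rpow hy.le hα₀ hA a) measurableSet_Ioi fun z hz => ?_
        have := exp_neg_mul_sub_le_exp_neg_sub_exp_neg (y ^ (-δ)) ((y + z) ^ (-δ))
        have : 0 ≤ a * z ^ (-1 - α) := by have := hA.trans hz; positivity
        nlinarith
end

section
/- Let δ > 0 and g(y) = exp(-y^{-δ}). Suppose ν is a measure on ℝ \ {0} with ∫_{[-1,1]} z² ν(dz) < ∞. Then there exists y_δ > 0 such that for all y > e·y_δ, ∫_{[-1,1]} [g(y e^z) - g(y) - y(e^z - 1) g'(y)] ν(dz) ≥ -9 δ(1+δ) y^{-δ} [e^{δ+2} ∫_{[-1,0]} z² ν(dz) + ∫_{[0,1]} z² ν(dz)]. -/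
/-!
Put `A = y^{-δ}` and `φ(u) = g(y eᵘ) = exp(-A e^{-δu})`. Then `y g'(y) = φ'(0)` and the integrand
is `φ(z) - φ(0) - (eᶻ - 1) φ'(0)`. With `t = A e^{-δu}` one has `φ'' = δ² t (t - 1) e^{-t}`, so
`|φ''| ≤ δ² t` as long as `t ≤ 1`, which holds on `[-1, 1]` once `y ≥ e` (take `y_δ = 1`).
Second-order Taylor for `φ`, together with `|eᶻ - 1 - z| ≤ z²`, bounds the integrand by
`δ(1+δ) A e^{-δ min(0,z)} z²`; the factor `e^{-δ min(0,z)}` is at most `e^δ` for `z ≤ 0` and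
equals `1` for `z ≥ 0`, which is why the two halves of `[-1, 1]` carry different constants.
-/

open MeasureTheory Set Real

theorem abs_sub_sub_mul_deriv_le_of_abs_deriv2_le {f f' f'' : ℝ → ℝ} {a x M : ℝ}
    (hf : ∀ u ∈ uIcc a x, HasDerivAt f (f' u) u)
    (hf' : ∀ u ∈ uIcc a x, HasDerivAt f' (f'' u) u)
    (hM : ∀ u ∈ uIcc a x, |f'' u| ≤ M) :
    |f x - f a - (x - a) * f' a| ≤ M * (x - a) ^ 2 := by
  have hconv : Convex ℝ (uIcc a x) := convex_uIcc a x
  have ha : a ∈ uIcc a x := left_mem_uIcc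
  have hM₀ : 0 ≤ M := (abs_nonneg _).trans (hM a ha)
  have hf'_sub : ∀ u ∈ uIcc a x, |f' u - f' a| ≤ M * |x - a| := fun u hu =>
    calc |f' u - f' a| ≤ M * |u - a| :=
          hconv.norm_image_sub_le_of_norm_hasDerivWithin_le
            (fun v hv => (hf' v hv).hasDerivWithinAt) hM ha hu
      _ ≤ M * |x - a| := mul_le_mul_of_nonneg_left (abs_sub_left_of_mem_uIcc hu) hM₀
  have hR : ∀ u ∈ uIcc a x, HasDerivWithinAt (fun u => f u - (u - a) * f' a)
      (f' u - f' a) (uIcc a x) u := fun u hu => by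
    simpa using
      ((hf u hu).fun_sub (((hasDerivAt_id u).sub_const a).mul_const (f' a))).hasDerivWithinAt
  calc |f x - f a - (x - a) * f' a|
        = |(f x - (x - a) * f' a) - (f a - (a - a) * f' a)| := by ring_nf
    _ ≤ M * |x - a| * |x - a| :=
        hconv.norm_image_sub_le_of_norm_hasDerivWithin_le hR hf'_sub ha right_mem_uIcc
    _ = M * (x - a) ^ 2 := by rw [mul_assoc, ← abs_mul, ← sq, abs_sq]

theorem abs_sub_sub_exp_sub_one_mul_deriv_le {φ φ' φ'' : ℝ → ℝ} {z M : ℝ} (hz : |z| ≤ 1)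
    (hφ : ∀ u ∈ uIcc 0 z, HasDerivAt φ (φ' u) u)
    (hφ' : ∀ u ∈ uIcc 0 z, HasDerivAt φ' (φ'' u) u)
    (hM : ∀ u ∈ uIcc 0 z, |φ'' u| ≤ M) :
    |φ z - φ 0 - (exp z - 1) * φ' 0| ≤ (M + |φ' 0|) * z ^ 2 := by
  have h₁ := abs_sub_sub_mul_deriv_le_of_abs_deriv2_le hφ hφ' hM
  have h₂ : |(exp z - 1 - z) * φ' 0| ≤ z ^ 2 * |φ' 0| := by
    rw [abs_mul]
    exact mul_le_mul_of_nonneg_right (abs_exp_sub_one_sub_id_le hz) (abs_nonneg _)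
  calc |φ z - φ 0 - (exp z - 1) * φ' 0|
        = |(φ z - φ 0 - (z - 0) * φ' 0) - (exp z - 1 - z) * φ' 0| := by ring_nf
    _ ≤ M * (z - 0) ^ 2 + z ^ 2 * |φ' 0| := (abs_sub _ _).trans (add_le_add h₁ h₂)
    _ = (M + |φ' 0|) * z ^ 2 := by ring

theorem hasDerivAt_mul_exp_neg_mul (δ A u : ℝ) :
    HasDerivAt (fun u => A * exp (-δ * u)) (-δ * (A * exp (-δ * u))) u := by
  exact ((((hasDerivAt_id' u).const_mul (-δ)).exp).const_mul A).congr_deriv (by ring)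

theorem hasDerivAt_exp_neg_mul_exp_neg_mul (δ A u : ℝ) :
    HasDerivAt (fun u => exp (-(A * exp (-δ * u))))
      (δ * (A * exp (-δ * u)) * exp (-(A * exp (-δ * u)))) u := by
  convert (hasDerivAt_mul_exp_neg_mul δ A u).fun_neg.exp using 1
  ring

theorem hasDerivAt_deriv_exp_neg_mul_exp_neg_mul (δ A u : ℝ) :
    HasDerivAt (fun u => δ * (A * exp (-δ * u)) * exp (-(A * exp (-δ * u))))
      (δ ^ 2 * (A * exp (-δ * u)) * (A * exp (-δ * u) - 1) * exp (-(A * exp (-δ * u)))) u := by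
  exact (((hasDerivAt_mul_exp_neg_mul δ A u).const_mul δ).fun_mul
    (hasDerivAt_exp_neg_mul_exp_neg_mul δ A u)).congr_deriv (by ring)

theorem abs_sq_mul_mul_sub_one_mul_exp_neg_le (δ : ℝ) {t : ℝ} (ht₀ : 0 ≤ t) (ht₁ : t ≤ 1) :
    |δ ^ 2 * t * (t - 1) * exp (-t)| ≤ δ ^ 2 * t := by
  have hexp : exp (-t) ≤ 1 := exp_le_one_iff.2 (by linarith)
  rw [abs_mul, abs_mul, abs_of_nonneg (by positivity : 0 ≤ δ ^ 2 * t),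
    abs_of_nonpos (by linarith : t - 1 ≤ 0), abs_of_pos (exp_pos _)]
  calc δ ^ 2 * t * -(t - 1) * exp (-t) ≤ δ ^ 2 * t * 1 * 1 := by gcongr; linarith
    _ = δ ^ 2 * t := by ring


theorem neg_le_setIntegral_Icc_of_forall_neg_le {ν : Measure ℝ} {f g : ℝ → ℝ}
    {a b c K₁ K₂ : ℝ} (hab : a ≤ b) (hbc : b ≤ c)
    (hf : IntegrableOn f (Icc a c) ν) (hg : IntegrableOn g (Icc a c) ν)
    (hg₀ : ∀ z ∈ Icc b c, 0 ≤ g z) (hK₂ : 0 ≤ K₂)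
    (h₁ : ∀ z ∈ Icc a b, -(K₁ * g z) ≤ f z) (h₂ : ∀ z ∈ Ioc b c, -(K₂ * g z) ≤ f z) :
    -(K₁ * ∫ z in Icc a b, g z ∂ν + K₂ * ∫ z in Icc b c, g z ∂ν) ≤ ∫ z in Icc a c, f z ∂ν := by
  have hIcc : Icc a b ⊆ Icc a c := Icc_subset_Icc_right hbc
  have hIoc : Ioc b c ⊆ Icc a c := Ioc_subset_Icc_self.trans (Icc_subset_Icc_left hab)
  have hleft : -(K₁ * ∫ z in Icc a b, g z ∂ν) ≤ ∫ z in Icc a b, f z ∂ν := by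
    rw [← integral_const_mul, ← integral_neg]
    exact setIntegral_mono_on ((hg.mono_set hIcc).const_mul K₁).neg (hf.mono_set hIcc)
      measurableSet_Icc h₁
  have hright : -(K₂ * ∫ z in Ioc b c, g z ∂ν) ≤ ∫ z in Ioc b c, f z ∂ν := by
    rw [← integral_const_mul, ← integral_neg]
    exact setIntegral_mono_on ((hg.mono_set hIoc).const_mul K₂).neg (hf.mono_set hIoc)
      measurableSet_Ioc h₂
  have hIoc_le : ∫ z in Ioc b c, g z ∂ν ≤ ∫ z in Icc b c, g z ∂ν :=
    setIntegral_mono_set (hg.mono_set (Icc_subset_Icc_left hab))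
      ((ae_restrict_iff' measurableSet_Icc).2 (ae_of_all _ hg₀))
      Ioc_subset_Icc_self.eventuallyLE
  rw [← Icc_union_Ioc_eq_Icc hab hbc,
    setIntegral_union ((Iic_disjoint_Ioc le_rfl).mono_left Icc_subset_Iic_self) measurableSet_Ioc
      (hf.mono_set hIcc) (hf.mono_set hIoc)]
  nlinarith

noncomputable def compensatedJump (δ A z : ℝ) : ℝ :=
  exp (-(A * exp (-δ * z))) - exp (-A) - (exp z - 1) * (δ * A * exp (-A))

theorem continuous_compensatedJump (δ A : ℝ) : Continuous (compensatedJump δ A) := by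
  unfold compensatedJump
  fun_prop

theorem abs_compensatedJump_le {δ A z : ℝ} (hδ : 0 ≤ δ) (hA : 0 ≤ A) (hA₁ : A * exp δ ≤ 1)
    (hz : |z| ≤ 1) :
    |compensatedJump δ A z| ≤ δ * (1 + δ) * (A * exp (-δ * min 0 z)) * z ^ 2 := by
  set B := A * exp (-δ * min 0 z)
  have ht : ∀ u ∈ uIcc 0 z, 0 ≤ A * exp (-δ * u) ∧ A * exp (-δ * u) ≤ min B 1 := by
    intro u hu
    have hu₀ : min 0 z ≤ u := hu.1
    have hu₁ : -1 ≤ u := (le_min (by norm_num) (neg_le_of_abs_le hz)).trans hu₀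
    refine ⟨by positivity, le_min ?_ ?_⟩
    · exact mul_le_mul_of_nonneg_left (exp_le_exp.2 (by nlinarith)) hA
    · calc A * exp (-δ * u) ≤ A * exp δ := by gcongr; nlinarith
        _ ≤ 1 := hA₁
  have hM : ∀ u ∈ uIcc 0 z, |δ ^ 2 * (A * exp (-δ * u)) * (A * exp (-δ * u) - 1)
      * exp (-(A * exp (-δ * u)))| ≤ δ ^ 2 * B := fun u hu =>
    (abs_sq_mul_mul_sub_one_mul_exp_neg_le δ (ht u hu).1
      ((ht u hu).2.trans (min_le_right _ _))).trans
      (by gcongr; exact (ht u hu).2.trans (min_le_left _ _))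
  have hA_le_B : A ≤ B := le_mul_of_one_le_right hA (one_le_exp (by
    nlinarith [min_le_left (0 : ℝ) z]))
  have hderiv₀ : |δ * A * exp (-A)| ≤ δ * B := by
    rw [abs_of_nonneg (by positivity)]
    calc δ * A * exp (-A) ≤ δ * A * 1 := by gcongr; exact exp_le_one_iff.2 (by linarith)
      _ ≤ δ * B := by rw [mul_one]; gcongr
  have key := abs_sub_sub_exp_sub_one_mul_deriv_le hz
    (fun u _ => hasDerivAt_exp_neg_mul_exp_neg_mul δ A u)
    (fun u _ => hasDerivAt_deriv_exp_neg_mul_exp_neg_mul δ A u) hM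
  simp only [mul_zero, exp_zero, mul_one] at key
  calc |compensatedJump δ A z| ≤ (δ ^ 2 * B + |δ * A * exp (-A)|) * z ^ 2 := key
    _ ≤ (δ ^ 2 * B + δ * B) * z ^ 2 := by gcongr
    _ = δ * (1 + δ) * B * z ^ 2 := by ring

theorem abs_compensatedJump_le_of_abs_le_one {δ A z : ℝ} (hδ : 0 ≤ δ) (hA : 0 ≤ A)
    (hA₁ : A * exp δ ≤ 1) (hz : |z| ≤ 1) :
    |compensatedJump δ A z| ≤ δ * (1 + δ) * (A * exp δ) * z ^ 2 := by
  have hmin : -1 ≤ min 0 z := le_min (by norm_num) (neg_le_of_abs_le hz)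
  refine (abs_compensatedJump_le hδ hA hA₁ hz).trans ?_
  gcongr
  nlinarith

theorem sub_sub_mul_deriv_eq_compensatedJump {δ y : ℝ} (hy : 0 < y) (z : ℝ) :
    exp (-((y * exp z) ^ (-δ))) - exp (-(y ^ (-δ)))
        - y * (exp z - 1) * deriv (fun x : ℝ => exp (-(x ^ (-δ)))) y
      = compensatedJump δ (y ^ (-δ)) z := by
  have hderiv : deriv (fun x : ℝ => exp (-(x ^ (-δ)))) y
      = exp (-(y ^ (-δ))) * -(-δ * y ^ (-δ - 1)) :=
    (hasDerivAt_rpow_const (Or.inl hy.ne')).fun_neg.exp.deriv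
  rw [hderiv, mul_rpow hy.le (exp_pos z).le, ← exp_mul, rpow_sub_one hy.ne', compensatedJump]
  field_simp

theorem integrableOn_compensatedJump {ν : Measure ℝ} {δ A : ℝ} (hδ : 0 ≤ δ) (hA : 0 ≤ A)
    (hA₁ : A * exp δ ≤ 1) (hν : IntegrableOn (fun z : ℝ => z ^ 2) (Icc (-1) 1) ν) :
    IntegrableOn (compensatedJump δ A) (Icc (-1) 1) ν :=
  (hν.const_mul (δ * (1 + δ) * (A * exp δ))).mono'
    (continuous_compensatedJump δ A).aestronglyMeasurable
    ((ae_restrict_iff' measurableSet_Icc).2 (ae_of_all _ fun _ hz =>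
      abs_compensatedJump_le_of_abs_le_one hδ hA hA₁ (abs_le.2 hz)))

theorem stmt5 (δ : ℝ) (hδ : 0 < δ) (ν : Measure ℝ)
    (hν : IntegrableOn (fun z : ℝ => z ^ 2) (Set.Icc (-1:ℝ) 1) ν) :
    ∃ yδ > (0:ℝ), ∀ y : ℝ, Real.exp 1 * yδ < y →
      -(9 * δ * (1 + δ) * y ^ (-δ)
          * (Real.exp (δ + 2) * ∫ z in Set.Icc (-1:ℝ) 0, z ^ 2 ∂ν
              + ∫ z in Set.Icc (0:ℝ) 1, z ^ 2 ∂ν))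
        ≤ ∫ z in Set.Icc (-1:ℝ) 1,
            (Real.exp (-((y * Real.exp z) ^ (-δ))) - Real.exp (-(y ^ (-δ)))
              - y * (Real.exp z - 1)
                  * deriv (fun x : ℝ => Real.exp (-(x ^ (-δ)))) y) ∂ν := by
  refine ⟨1, one_pos, fun y hy => ?_⟩
  rw [mul_one] at hy
  have hy₀ : 0 < y := (exp_pos 1).trans hy
  simp_rw [sub_sub_mul_deriv_eq_compensatedJump hy₀]
  set A := y ^ (-δ)
  have hA : 0 < A := rpow_pos_of_pos hy₀ _
  have hA₁ : A * exp δ ≤ 1 :=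
    calc A * exp δ ≤ exp 1 ^ (-δ) * exp δ := by
          gcongr; exact rpow_le_rpow_of_nonpos (exp_pos 1) hy.le (by linarith)
      _ = 1 := by rw [exp_one_rpow, ← exp_add, neg_add_cancel, exp_zero]
  have hc : 0 ≤ δ * (1 + δ) * A := by positivity
  have hexp : exp δ ≤ 9 * exp (δ + 2) := by
    rw [exp_add]; nlinarith [exp_pos δ, one_le_exp (by norm_num : (0:ℝ) ≤ 2)]
  refine le_of_eq_of_le (by ring) (neg_le_setIntegral_Icc_of_forall_neg_le
    (K₁ := 9 * δ * (1 + δ) * A * exp (δ + 2)) (K₂ := 9 * δ * (1 + δ) * A) (by norm_num)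
    (by norm_num) (integrableOn_compensatedJump hδ.le hA.le hA₁ hν) hν
    (fun z _ => sq_nonneg z) (by positivity) (fun z hz => ?_) (fun z hz => ?_))
  · have hz' : |z| ≤ 1 := abs_le.2 ⟨hz.1, hz.2.trans zero_le_one⟩
    refine le_trans ?_ (neg_abs_le _)
    refine neg_le_neg ((abs_compensatedJump_le_of_abs_le_one hδ.le hA.le hA₁ hz').trans ?_)
    nlinarith [mul_le_mul_of_nonneg_left hexp (mul_nonneg hc (sq_nonneg z))]
  · have hz' : |z| ≤ 1 := abs_le.2 ⟨by linarith [hz.1], hz.2⟩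
    refine le_trans ?_ (neg_abs_le _)
    refine neg_le_neg ((abs_compensatedJump_le hδ.le hA.le hA₁ hz').trans ?_)
    rw [min_eq_left hz.1.le, mul_zero, exp_zero, mul_one]
    nlinarith [mul_nonneg hc (sq_nonneg z)]
end

section
/- Fix n ≥ 9, A > 1 and let g_n(y) = ln(ln(n² y)). For all y ≥ 1/n: ∫_A^∞ [g_n(y+z) - g_n(y)] z^{-2} dz ≤ y^{-1} (ln(n² y))^{-1} [1 + ln(1 + y/A)]. -/
/-!
Since `log t ≤ t - 1`, the increment `log (log (n²(y+z))) - log (log (n²y))` is at most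
`(log (y+z) - log y) / log (n²y)`, so it suffices to integrate `(log (y+z) - log y) / z²` over
`(A, ∞)`. Integration by parts gives it in closed form as
`(log (y+A) - log y) / A + y⁻¹ log (1 + y/A)`, and the first term is at most `y⁻¹`.
-/

open MeasureTheory Filter Set Real Topology

lemma Real.log_sub_log_le_div {a b : ℝ} (ha : 0 < a) (hb : 0 < b) :
    log b - log a ≤ (b - a) / a := by
  have := log_le_sub_one_of_pos (div_pos hb ha)
  rwa [log_div hb.ne' ha.ne', div_sub_one ha.ne'] at this

section LogAddPrimitive

variable {y : ℝ}

-- Integration by parts, with `y⁻¹ (log z - log (y + z))` a primitive of `(z (y + z))⁻¹`.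
lemma hasDerivAt_log_add_primitive (hy : 0 < y) {z : ℝ} (hz : 0 < z) :
    HasDerivAt (fun z => -((log (y + z) - log y) / z) + y⁻¹ * (log z - log (y + z)))
      ((log (y + z) - log y) / z ^ 2) z := by
  have hyz : 0 < y + z := by linarith
  have hlog : HasDerivAt (fun z => log (y + z)) (y + z)⁻¹ z := by
    simpa using ((hasDerivAt_id z).const_add y).log hyz.ne'
  refine ((((hlog.sub_const (log y)).div (hasDerivAt_id z) hz.ne').neg).add
    (((hasDerivAt_log hz.ne').sub hlog).const_mul y⁻¹)).congr_deriv ?_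
  simp only [id]
  field_simp
  ring

lemma tendsto_log_add_primitive_atTop :
    Tendsto (fun z => -((log (y + z) - log y) / z) + y⁻¹ * (log z - log (y + z)))
      atTop (𝓝 0) := by
  have h₁ : Tendsto (fun z => log (y + z) / z) atTop (𝓝 0) := by
    have := (tendsto_pow_log_div_mul_add_atTop 1 (-y) 1 one_ne_zero).comp
      (tendsto_atTop_add_const_left atTop y tendsto_id)
    refine this.congr fun z => ?_
    simp
  have h₂ : Tendsto (fun z => log y / z) atTop (𝓝 0) :=
    tendsto_const_nhds.div_atTop tendsto_id
  have h₃ := (tendsto_log_comp_add_sub_log y).const_mul y⁻¹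
  have := ((h₁.sub h₂).neg).sub h₃
  simp only [sub_zero, neg_zero, mul_zero] at this
  refine this.congr fun z => ?_
  rw [add_comm z y]; ring

lemma log_add_sub_log_div_sq_nonneg (hy : 0 < y) {z : ℝ} (hz : 0 ≤ z) :
    0 ≤ (log (y + z) - log y) / z ^ 2 :=
  div_nonneg (sub_nonneg.2 (log_le_log hy (by linarith))) (sq_nonneg z)

variable {A : ℝ}

lemma integrableOn_log_add_sub_log_div_sq (hy : 0 < y) (hA : 0 < A) :
    IntegrableOn (fun z => (log (y + z) - log y) / z ^ 2) (Ioi A) :=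
  integrableOn_Ioi_deriv_of_nonneg'
    (fun _ hz => hasDerivAt_log_add_primitive hy (hA.trans_le hz))
    (fun _ hz => log_add_sub_log_div_sq_nonneg hy (hA.trans hz).le)
    tendsto_log_add_primitive_atTop

lemma integral_log_add_sub_log_div_sq (hy : 0 < y) (hA : 0 < A) :
    ∫ z in Ioi A, (log (y + z) - log y) / z ^ 2
      = (log (y + A) - log y) / A + y⁻¹ * log (1 + y / A) := by
  rw [integral_Ioi_of_hasDerivAt_of_nonneg'
    (fun _ hz => hasDerivAt_log_add_primitive hy (hA.trans_le hz))
    (fun _ hz => log_add_sub_log_div_sq_nonneg hy (hA.trans hz).le)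
    tendsto_log_add_primitive_atTop,
    one_add_div hA.ne', log_div (by positivity) hA.ne', add_comm A y]
  ring

lemma log_add_sub_log_div_le_inv (hy : 0 < y) (hA : 0 < A) :
    (log (y + A) - log y) / A ≤ y⁻¹ := by
  rw [div_le_iff₀ hA]
  calc log (y + A) - log y ≤ (y + A - y) / y := log_sub_log_le_div hy (by linarith)
    _ = y⁻¹ * A := by ring

end LogAddPrimitive

lemma log_log_mul_add_sub_le {c y z : ℝ} (hc : 0 < c) (hy : 0 < y) (hz : 0 ≤ z)
    (hL : 0 < log (c * y)) :
    0 ≤ log (log (c * (y + z))) - log (log (c * y)) ∧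
      log (log (c * (y + z))) - log (log (c * y)) ≤ (log (y + z) - log y) / log (c * y) := by
  have hmono : log (c * y) ≤ log (c * (y + z)) :=
    log_le_log (by positivity) (by nlinarith)
  refine ⟨sub_nonneg.2 (log_le_log hL hmono), ?_⟩
  calc log (log (c * (y + z))) - log (log (c * y))
      ≤ (log (c * (y + z)) - log (c * y)) / log (c * y) :=
        log_sub_log_le_div hL (hL.trans_le hmono)
    _ = (log (y + z) - log y) / log (c * y) := by
        rw [log_mul hc.ne' (by linarith), log_mul hc.ne' hy.ne']
        ring

theorem stmt10 (n : ℕ) (hn : 9 ≤ n) (A : ℝ) (hA : 1 < A) :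
    ∀ y : ℝ, 1 / (n : ℝ) ≤ y →
      ∫ z in Set.Ioi A,
          (Real.log (Real.log ((n : ℝ) ^ 2 * (y + z)))
            - Real.log (Real.log ((n : ℝ) ^ 2 * y))) * z ^ (-2 : ℝ)
        ≤ y⁻¹ * (Real.log ((n : ℝ) ^ 2 * y))⁻¹ * (1 + Real.log (1 + y / A)) := by
  intro y hy
  have hn1 : (1 : ℝ) < n := by exact_mod_cast (by omega : 1 < n)
  have hy0 : 0 < y := (by positivity : (0 : ℝ) < 1 / n).trans_le hy
  have hA0 : 0 < A := by linarith
  have hL : 0 < log ((n : ℝ) ^ 2 * y) := by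
    refine log_pos (hn1.trans_le ?_)
    calc (n : ℝ) = (n : ℝ) ^ 2 * (1 / n) := by field_simp
      _ ≤ (n : ℝ) ^ 2 * y := by gcongr
  set L := log ((n : ℝ) ^ 2 * y)
  have hbound : ∀ z ∈ Ioi A,
      0 ≤ (log (log ((n : ℝ) ^ 2 * (y + z))) - log L) * z ^ (-2 : ℝ) ∧
      (log (log ((n : ℝ) ^ 2 * (y + z))) - log L) * z ^ (-2 : ℝ)
        ≤ L⁻¹ * ((log (y + z) - log y) / z ^ 2) := by
    intro z hz
    have hz0 : 0 < z := hA0.trans hz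
    obtain ⟨h₀, h₁⟩ := log_log_mul_add_sub_le (by positivity) hy0 hz0.le hL
    rw [rpow_neg hz0.le, rpow_two]
    refine ⟨mul_nonneg h₀ (by positivity), ?_⟩
    calc _ ≤ (log (y + z) - log y) / L * (z ^ 2)⁻¹ := by gcongr
      _ = _ := by ring
  calc _ ≤ ∫ z in Ioi A, L⁻¹ * ((log (y + z) - log y) / z ^ 2) :=
        integral_mono_of_nonneg
          (ae_restrict_of_forall_mem measurableSet_Ioi fun z hz => (hbound z hz).1)
          ((integrableOn_log_add_sub_log_div_sq hy0 hA0).const_mul _)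
          (ae_restrict_of_forall_mem measurableSet_Ioi fun z hz => (hbound z hz).2)
    _ = L⁻¹ * ((log (y + A) - log y) / A + y⁻¹ * log (1 + y / A)) := by
        rw [integral_const_mul, integral_log_add_sub_log_div_sq hy0 hA0]
    _ ≤ L⁻¹ * (y⁻¹ + y⁻¹ * log (1 + y / A)) := by
        gcongr
        exact log_add_sub_log_div_le_inv hy0 hA0
    _ = y⁻¹ * L⁻¹ * (1 + log (1 + y / A)) := by ring
end

section
/- Fix n ≥ 9, A > 1, ā > 0 and α ∈ (0,1), and let g_n(y) = ln(ln(n² y)). Then for all y ≥ 1/n: ∫_A^∞ [g_n(y+z) - g_n(y)] z^{-1-α} dz ≤ (ln(n² y))^{-1} c_{α,0} y^{-α}, where c_{α,0} = π/(α sin(απ)). -/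
/-!
Since `t ↦ log t` is concave, `log (log (n²(y+z))) - log (log (n²y))` is at most
`(log (n²y))⁻¹ (log (y+z) - log y)`. The latter is nonnegative, so the integral over `(A, ∞)` is
bounded by the integral over `(0, ∞)`, which the substitution `z = y u` reduces to
`y^{-α} ∫₀^∞ log (1+u) u^{-1-α} du`. Integrating by parts turns this into
`α⁻¹ ∫₀^∞ u^{-α} (1+u)⁻¹ du`, and the substitution `x = u/(1+u)` identifies the last integral
with the beta integral `B(1-α, α) = Γ(1-α) Γ(α) = π / sin (π α)`.
-/

open MeasureTheory Set Real Filter Topology Asymptotics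

theorem integral_Ioo_rpow_mul_one_sub_rpow {u v : ℝ} (hu : 0 < u) (hv : 0 < v) :
    ∫ x in Ioo (0:ℝ) 1, x ^ (u - 1) * (1 - x) ^ (v - 1) = Gamma u * Gamma v / Gamma (u + v) := by
  rw [← ProbabilityTheory.beta, ProbabilityTheory.beta_eq_betaIntegralReal u v hu hv,
    Complex.betaIntegral, intervalIntegral.integral_of_le zero_le_one,
    ← integral_Ioc_eq_integral_Ioo, ← RCLike.re_to_complex, ← integral_re]
  · refine setIntegral_congr_fun measurableSet_Ioc fun x ⟨hx0, hx1⟩ ↦ ?_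
    norm_cast
    rw [← Complex.ofReal_cpow hx0.le, ← Complex.ofReal_cpow (by linarith),
      RCLike.re_to_complex, ← Complex.ofReal_mul, Complex.ofReal_re]
  · exact (intervalIntegrable_iff_integrableOn_Ioc_of_le zero_le_one).mp
      (Complex.betaIntegral_convergent (by simpa) (by simpa))

theorem image_div_one_add_Ioi_zero : (fun u : ℝ ↦ u / (1 + u)) '' Ioi 0 = Ioo 0 1 := by
  ext x
  constructor
  · rintro ⟨u, hu : 0 < u, rfl⟩
    exact ⟨by positivity, (div_lt_one (by linarith)).mpr (by linarith)⟩
  · rintro ⟨hx0, hx1⟩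
    refine ⟨x / (1 - x), div_pos hx0 (by linarith), ?_⟩
    field_simp
    ring

theorem integral_Ioi_rpow_neg_mul_inv_one_add {α : ℝ} (h0 : 0 < α) (h1 : α < 1) :
    ∫ u in Ioi (0:ℝ), u ^ (-α) * (1 + u)⁻¹ = π / sin (π * α) := by
  have hderiv : ∀ u ∈ Ioi (0:ℝ),
      HasDerivWithinAt (fun u : ℝ ↦ u / (1 + u)) ((1 + u) ^ 2)⁻¹ (Ioi 0) u := by
    intro u (hu : 0 < u)
    refine (((hasDerivAt_id u).div ((hasDerivAt_id u).const_add 1) (by positivity)).congr_deriv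
      ?_).hasDerivWithinAt
    simp only [id]
    field_simp
    ring
  have hinj : InjOn (fun u : ℝ ↦ u / (1 + u)) (Ioi 0) := by
    intro a (ha : 0 < a) b (hb : 0 < b) h
    field_simp at h
    linarith
  have hbeta := integral_Ioo_rpow_mul_one_sub_rpow (sub_pos.mpr h1) h0
  rw [sub_add_cancel, Gamma_one, div_one, mul_comm, Gamma_mul_Gamma_one_sub,
    ← image_div_one_add_Ioi_zero,
    integral_image_eq_integral_abs_deriv_smul measurableSet_Ioi hderiv hinj] at hbeta
  rw [← hbeta]
  refine setIntegral_congr_fun measurableSet_Ioi fun u (hu : 0 < u) ↦ ?_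
  have hu1 : 0 < 1 + u := by linarith
  have hsub : 1 - u / (1 + u) = (1 + u)⁻¹ := by field_simp; ring
  rw [hsub, div_rpow hu.le hu1.le, inv_rpow hu1.le, ← rpow_neg hu1.le, smul_eq_mul,
    abs_of_pos (by positivity), sub_sub_cancel_left, div_eq_mul_inv, ← rpow_neg hu1.le,
    ← rpow_natCast, ← rpow_neg hu1.le, neg_neg]
  have hpow : (1 + u) ^ (-(2:ℝ)) * ((1 + u) ^ α * (1 + u) ^ (-(α - 1))) = (1 + u)⁻¹ := by
    rw [← rpow_add hu1, ← rpow_add hu1, ← rpow_neg_one]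
    ring_nf
  rw [Nat.cast_ofNat, ← hpow]
  ring

theorem isBigO_log_one_add_nhdsGT_zero :
    (fun x : ℝ ↦ log (1 + x)) =O[𝓝[>] 0] fun x ↦ x := by
  refine IsBigO.of_bound 1 ?_
  filter_upwards [self_mem_nhdsWithin] with x (hx : 0 < x)
  rw [norm_of_nonneg (log_nonneg (by linarith)), norm_of_nonneg hx.le, one_mul]
  linarith [log_le_sub_one_of_pos (by linarith : 0 < 1 + x)]

theorem isBigO_log_one_add_rpow_atTop {r : ℝ} (hr : 0 < r) :
    (fun x : ℝ ↦ log (1 + x)) =O[atTop] (· ^ r) := by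
  refine IsBigO.of_bound (2 ^ r / r) ?_
  filter_upwards [eventually_ge_atTop 1] with x hx
  rw [norm_of_nonneg (log_nonneg (by linarith)), norm_of_nonneg (by positivity)]
  calc log (1 + x) ≤ (1 + x) ^ r / r := log_le_rpow_div (by linarith) hr
    _ ≤ (2 * x) ^ r / r := by gcongr; linarith
    _ = 2 ^ r / r * x ^ r := by rw [mul_rpow zero_le_two (by linarith)]; ring

theorem integrableOn_Ioi_rpow_neg_mul_inv_one_add {α : ℝ} (h0 : 0 < α) (h1 : α < 1) :
    IntegrableOn (fun u : ℝ ↦ u ^ (-α) * (1 + u)⁻¹) (Ioi 0) := by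
  have hcont : ContinuousOn (fun u : ℝ ↦ (1 + u)⁻¹) (Ioi 0) :=
    (continuousOn_const.add (continuousOn_id' _)).inv₀ fun u (hu : 0 < u) ↦
      (add_pos one_pos hu).ne'
  have htop : (fun u : ℝ ↦ (1 + u)⁻¹) =O[atTop] (· ^ (-1 : ℝ)) := by
    refine IsBigO.of_bound 1 ?_
    filter_upwards [eventually_gt_atTop 0] with u hu
    rw [rpow_neg_one, norm_inv, norm_inv, norm_of_nonneg (by positivity),
      norm_of_nonneg hu.le, one_mul]
    exact inv_anti₀ hu (by linarith)
  have hbot : (fun u : ℝ ↦ (1 + u)⁻¹) =O[𝓝[>] 0] (· ^ (-0 : ℝ)) := by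
    refine IsBigO.of_bound 1 ?_
    filter_upwards [self_mem_nhdsWithin] with u (hu : 0 < u)
    rw [neg_zero, rpow_zero, norm_inv, norm_one, norm_of_nonneg (by positivity), one_mul]
    exact inv_le_one_of_one_le₀ (by linarith)
  simpa [sub_sub_cancel_left] using mellin_convergent_of_isBigO_scalar
    (hcont.locallyIntegrableOn measurableSet_Ioi) htop (by linarith : 1 - α < 1) hbot
    (by linarith : 0 < 1 - α)

theorem integrableOn_Ioi_log_one_add_mul_rpow {α : ℝ} (h0 : 0 < α) (h1 : α < 1) :
    IntegrableOn (fun u : ℝ ↦ log (1 + u) * u ^ (-1 - α)) (Ioi 0) := by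
  have hcont : ContinuousOn (fun u : ℝ ↦ log (1 + u)) (Ioi 0) :=
    (continuousOn_const.add (continuousOn_id' _)).log fun u (hu : 0 < u) ↦
      (add_pos one_pos hu).ne'
  have htop : (fun u : ℝ ↦ log (1 + u)) =O[atTop] (· ^ (-(-(α / 2)))) := by
    simpa using isBigO_log_one_add_rpow_atTop (half_pos h0)
  have hbot : (fun u : ℝ ↦ log (1 + u)) =O[𝓝[>] 0] (· ^ (-(-1 : ℝ))) := by
    simpa using isBigO_log_one_add_nhdsGT_zero
  have := mellin_convergent_of_isBigO_scalar (hcont.locallyIntegrableOn measurableSet_Ioi)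
    htop (by linarith : -α < -(α / 2)) hbot (by linarith : -1 < -α)
  simpa [mul_comm, sub_eq_add_neg, add_comm] using this

theorem tendsto_log_one_add_mul_rpow_neg_nhdsGT_zero {α : ℝ} (h1 : α < 1) :
    Tendsto (fun x : ℝ ↦ log (1 + x) * x ^ (-α)) (𝓝[>] 0) (𝓝 0) := by
  have hpow : Tendsto (fun x : ℝ ↦ x ^ (1 - α)) (𝓝[>] 0) (𝓝 0) := by
    simpa [zero_rpow (by linarith : 1 - α ≠ 0)] using
      ((continuousAt_rpow_const 0 (1 - α) (Or.inr (by linarith))).tendsto).mono_left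
        nhdsWithin_le_nhds
  refine (isBigO_log_one_add_nhdsGT_zero.mul (isBigO_refl (· ^ (-α)) _)).trans_tendsto
    (hpow.congr' ?_)
  filter_upwards [self_mem_nhdsWithin] with x (hx : 0 < x)
  rw [rpow_sub hx, rpow_one, rpow_neg hx.le, div_eq_mul_inv]

theorem tendsto_log_one_add_mul_rpow_neg_atTop {α : ℝ} (h0 : 0 < α) :
    Tendsto (fun x : ℝ ↦ log (1 + x) * x ^ (-α)) atTop (𝓝 0) := by
  refine ((isBigO_log_one_add_rpow_atTop (half_pos h0)).mul
    (isBigO_refl (· ^ (-α)) _)).trans_tendsto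
    ((tendsto_rpow_neg_atTop (half_pos h0)).congr' ?_)
  filter_upwards [eventually_gt_atTop 0] with x hx
  rw [← rpow_add hx]
  ring_nf

theorem integral_Ioi_log_one_add_mul_rpow {α : ℝ} (h0 : 0 < α) (h1 : α < 1) :
    ∫ u in Ioi (0:ℝ), log (1 + u) * u ^ (-1 - α) = π / (α * sin (α * π)) := by
  have hlog : ∀ x ∈ Ioi (0:ℝ), HasDerivAt (fun x ↦ log (1 + x)) (1 + x)⁻¹ x :=
    fun x (hx : 0 < x) ↦ by simpa using ((hasDerivAt_id x).const_add 1).log (by positivity)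
  have hpow : ∀ x ∈ Ioi (0:ℝ), HasDerivAt (fun x ↦ -α⁻¹ * x ^ (-α)) (x ^ (-1 - α)) x :=
    fun x (hx : 0 < x) ↦ ((hasDerivAt_rpow_const (Or.inl hx.ne')).const_mul (-α⁻¹)).congr_deriv
      (by rw [show -α - 1 = -1 - α by ring]; field_simp)
  have hlim (l : Filter ℝ) (h : Tendsto (fun x : ℝ ↦ log (1 + x) * x ^ (-α)) l (𝓝 0)) :
      Tendsto (fun x ↦ log (1 + x) * (-α⁻¹ * x ^ (-α))) l (𝓝 0) := by
    simpa [mul_left_comm] using h.const_mul (-α⁻¹)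
  have hparts := integral_Ioi_mul_deriv_eq_deriv_mul hlog hpow
    (integrableOn_Ioi_log_one_add_mul_rpow h0 h1)
    (IntegrableOn.congr_fun ((integrableOn_Ioi_rpow_neg_mul_inv_one_add h0 h1).const_mul (-α⁻¹))
      (fun x _ ↦ by simp only [Pi.mul_apply]; ring) measurableSet_Ioi)
    (hlim _ (tendsto_log_one_add_mul_rpow_neg_nhdsGT_zero h1))
    (hlim _ (tendsto_log_one_add_mul_rpow_neg_atTop h0))
  have hK : ∫ x in Ioi (0:ℝ), (1 + x)⁻¹ * x ^ (-α) = π / sin (π * α) := by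
    simpa only [mul_comm] using integral_Ioi_rpow_neg_mul_inv_one_add h0 h1
  simp_rw [hparts, mul_left_comm _ (-α⁻¹), integral_const_mul, hK, mul_comm π α]
  field_simp
  ring

theorem log_add_mul_sub_log_mul_rpow {y u : ℝ} (p : ℝ) (hy : 0 < y) (hu : 0 < u) :
    (log (y + y * u) - log y) * (y * u) ^ p = y ^ p * (log (1 + u) * u ^ p) := by
  rw [show y + y * u = y * (1 + u) by ring, log_mul hy.ne' (by positivity), mul_rpow hy.le hu.le]
  ring

theorem integrableOn_Ioi_log_add_sub_log_mul_rpow {α y : ℝ} (h0 : 0 < α) (h1 : α < 1)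
    (hy : 0 < y) : IntegrableOn (fun z ↦ (log (y + z) - log y) * z ^ (-1 - α)) (Ioi 0) := by
  rw [← mul_zero y, ← integrableOn_Ioi_comp_mul_left_iff _ _ hy]
  exact IntegrableOn.congr_fun ((integrableOn_Ioi_log_one_add_mul_rpow h0 h1).const_mul _)
    (fun u hu ↦ (log_add_mul_sub_log_mul_rpow _ hy hu).symm) measurableSet_Ioi

theorem integral_Ioi_log_add_sub_log_mul_rpow {α y : ℝ} (h0 : 0 < α) (h1 : α < 1)
    (hy : 0 < y) : ∫ z in Ioi (0:ℝ), (log (y + z) - log y) * z ^ (-1 - α)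
      = π / (α * sin (α * π)) * y ^ (-α) := by
  rw [← mul_zero y, ← integral_comp_mul_left_Ioi' _ _ hy,
    setIntegral_congr_fun measurableSet_Ioi fun u hu ↦ log_add_mul_sub_log_mul_rpow _ hy hu,
    integral_const_mul, integral_Ioi_log_one_add_mul_rpow h0 h1, smul_eq_mul, ← mul_assoc,
    ← rpow_one_add' hy.le (by ring_nf; exact neg_ne_zero.mpr h0.ne')]
  ring_nf

theorem log_sub_log_le_sub_div {x y : ℝ} (hx : 0 < x) (hy : 0 < y) :
    log y - log x ≤ (y - x) / x := by
  rw [← log_div hy.ne' hx.ne', sub_div, div_self hx.ne']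
  exact log_le_sub_one_of_pos (div_pos hy hx)

theorem log_log_mul_add_sub_mem_Icc {c y z : ℝ} (hy : 0 < y) (hcy : 1 < c * y) (hz : 0 ≤ z) :
    log (log (c * (y + z))) - log (log (c * y)) ∈
      Icc 0 ((log (c * y))⁻¹ * (log (y + z) - log y)) := by
  have hc : 0 < c := pos_of_mul_pos_left (by linarith) hy.le
  have hL : 0 < log (c * y) := log_pos hcy
  have hLB : log (c * y) ≤ log (c * (y + z)) :=
    log_le_log (by linarith) (by gcongr; linarith)
  refine ⟨sub_nonneg.mpr (log_le_log hL hLB), ?_⟩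
  calc _ ≤ (log (c * (y + z)) - log (c * y)) / log (c * y) :=
        log_sub_log_le_sub_div hL (by linarith)
    _ = _ := by
      rw [log_mul hc.ne' (by linarith), log_mul hc.ne' hy.ne', inv_mul_eq_div]
      ring_nf

theorem stmt12_general (n : ℕ) (hn : 9 ≤ n) (A α : ℝ) (hA : 1 < A)
    (hα : α ∈ Set.Ioo (0:ℝ) 1) :
    ∀ y : ℝ, 1 / (n : ℝ) ≤ y →
      ∫ z in Set.Ioi A,
          (Real.log (Real.log ((n : ℝ) ^ 2 * (y + z)))
            - Real.log (Real.log ((n : ℝ) ^ 2 * y))) * z ^ (-1 - α)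
        ≤ (Real.log ((n : ℝ) ^ 2 * y))⁻¹
            * (Real.pi / (α * Real.sin (α * Real.pi))) * y ^ (-α) := by
  intro y hy
  have hn1 : (1:ℝ) < n := by exact_mod_cast (by omega : 1 < n)
  have hy0 : 0 < y := lt_of_lt_of_le (by positivity) hy
  have hny : 1 < (n:ℝ) ^ 2 * y := calc
    (1:ℝ) < n ^ 2 * (1 / n) := by field_simp; exact hn1
    _ ≤ n ^ 2 * y := by gcongr
  have hA0 : Ioi A ⊆ Ioi 0 := Ioi_subset_Ioi (by linarith)
  have hbound (z : ℝ) (hz : z ∈ Ioi A) := log_log_mul_add_sub_mem_Icc hy0 hny (hA0 hz).le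
  set L := log ((n:ℝ) ^ 2 * y)
  have hint : IntegrableOn (fun z ↦ L⁻¹ * ((log (y + z) - log y) * z ^ (-1 - α))) (Ioi 0) :=
    (integrableOn_Ioi_log_add_sub_log_mul_rpow hα.1 hα.2 hy0).const_mul L⁻¹
  calc _ ≤ ∫ z in Ioi A, L⁻¹ * ((log (y + z) - log y) * z ^ (-1 - α)) := by
        refine integral_mono_of_nonneg ?_ (hint.mono_set hA0) ?_
        all_goals filter_upwards [ae_restrict_mem measurableSet_Ioi] with z hz
        · exact mul_nonneg (hbound z hz).1 (rpow_nonneg (hA0 hz).le _)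
        · rw [← mul_assoc]
          exact mul_le_mul_of_nonneg_right (hbound z hz).2 (rpow_nonneg (hA0 hz).le _)
    _ ≤ ∫ z in Ioi 0, L⁻¹ * ((log (y + z) - log y) * z ^ (-1 - α)) := by
        refine setIntegral_mono_set hint ?_ hA0.eventuallyLE
        filter_upwards [ae_restrict_mem measurableSet_Ioi] with z (hz : 0 < z)
        exact mul_nonneg (inv_nonneg.mpr (log_nonneg hny.le)) (mul_nonneg
          (sub_nonneg.mpr (log_le_log hy0 (by linarith))) (rpow_nonneg hz.le _))
    _ = _ := by
        rw [integral_const_mul, integral_Ioi_log_add_sub_log_mul_rpow hα.1 hα.2 hy0, mul_assoc]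

theorem stmt12 (n : ℕ) (hn : 9 ≤ n) (A a α : ℝ) (hA : 1 < A) (ha : 0 < a)
    (hα : α ∈ Set.Ioo (0:ℝ) 1) :
    ∀ y : ℝ, 1 / (n : ℝ) ≤ y →
      ∫ z in Set.Ioi A,
          (Real.log (Real.log ((n : ℝ) ^ 2 * (y + z)))
            - Real.log (Real.log ((n : ℝ) ^ 2 * y))) * z ^ (-1 - α)
        ≤ (Real.log ((n : ℝ) ^ 2 * y))⁻¹
            * (Real.pi / (α * Real.sin (α * Real.pi))) * y ^ (-α) :=
  stmt12_general n hn A α hA hα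
end
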